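/- arXiv:math/0702321 — 7 statements merged into one kernel-verified Lean document; each statement's English description precedes it below -/
import Mathlib

section
/- With F as above and R a unit, for every integer i with 0 ≤ i ≤ d−3 there exist unique polynomials U_i of degree at most d−2 and V_i of degree at most d−1 in p with coefficients in O such that p^i·(∂_x F + p·∂_y F) = U_i·F + V_i·∂_p F. -/
open Polynomial

/-- Coefficientwise application of a derivation `δ` of `O` to a polynomial in `O[X]`. -/
noncomputable def cderiv {O : Type*} [CommRing O] (δ : O → O) (f : O[X]) : O[X] :=
  f.sum fun n a => C (δ a) * X ^ n

/-- The Sylvester matrix of `f` (degree `n`) and `g` (degree `m`); its determinant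
is the resultant of `f` and `g`. -/
noncomputable def sylvester {O : Type*} [CommRing O] (f g : O[X]) (n m : ℕ) :
    Matrix (Fin (m + n)) (Fin (m + n)) O :=
  Matrix.of fun i j =>
    if (i : ℕ) < m then
      (if (i : ℕ) ≤ (j : ℕ) ∧ (j : ℕ) ≤ (i : ℕ) + n then f.coeff (n - ((j : ℕ) - (i : ℕ))) else 0)
    else
      (if (i : ℕ) - m ≤ (j : ℕ) ∧ (j : ℕ) ≤ (i : ℕ) - m + m then
        g.coeff (m - ((j : ℕ) - ((i : ℕ) - m))) else 0)

namespace S1Aux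

variable {O : Type*} [CommRing O]

lemma natDegree_cderiv_le (δ : O → O) (f : O[X]) : (cderiv δ f).natDegree ≤ f.natDegree := by
  unfold cderiv Polynomial.sum
  refine natDegree_sum_le_of_forall_le _ _ fun i hi => ?_
  exact le_trans (natDegree_C_mul_X_pow_le _ _) (le_natDegree_of_mem_supp _ hi)

noncomputable def encU (m n : ℕ) (u : Fin (m + n) → O) : O[X] :=
  ∑ i : Fin m, C (u (Fin.castAdd n i)) * X ^ (m - 1 - (i : ℕ))

noncomputable def encV (m n : ℕ) (u : Fin (m + n) → O) : O[X] :=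
  ∑ i : Fin n, C (u (Fin.natAdd m i)) * X ^ (n - 1 - (i : ℕ))

lemma natDegree_encU_le (m n : ℕ) (u : Fin (m + n) → O) : (encU m n u).natDegree ≤ m - 1 :=
  natDegree_sum_le_of_forall_le _ _ fun i _ =>
    le_trans (natDegree_C_mul_X_pow_le _ _) (Nat.sub_le_sub_left (Nat.zero_le _) _ |>.trans le_rfl)

lemma natDegree_encV_le (m n : ℕ) (u : Fin (m + n) → O) : (encV m n u).natDegree ≤ n - 1 :=
  natDegree_sum_le_of_forall_le _ _ fun i _ =>
    le_trans (natDegree_C_mul_X_pow_le _ _) (Nat.sub_le_sub_left (Nat.zero_le _) _ |>.trans le_rfl)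

/-- Reconstruct a polynomial of bounded degree from its reversed coefficient list. -/
lemma sum_rev_eq (m : ℕ) (hm : 1 ≤ m) (U : O[X]) (hU : U.natDegree ≤ m - 1) :
    ∑ i : Fin m, C (U.coeff (m - 1 - (i : ℕ))) * X ^ (m - 1 - (i : ℕ)) = U := by
  have h1 : ∑ i : Fin m, C (U.coeff (m - 1 - (i : ℕ))) * X ^ (m - 1 - (i : ℕ))
      = ∑ i ∈ Finset.range m, C (U.coeff (m - 1 - i)) * X ^ (m - 1 - i) :=
    Fin.sum_univ_eq_sum_range (fun k => C (U.coeff (m - 1 - k)) * X ^ (m - 1 - k)) m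
  rw [h1, Finset.sum_range_reflect (fun i => C (U.coeff i) * X ^ i) m]
  simp only [C_mul_X_pow_eq_monomial]
  exact (as_sum_range' U m (by omega)).symm

/-- The key coefficient computation: row `j` of `vecMul u S` is the coefficient of
`encU u * f + encV u * g` at `X^(m+n-1-j)`. -/
lemma coeff_key (m n : ℕ) (f g : O[X]) (hf : f.natDegree ≤ n) (hg : g.natDegree ≤ m)
    (u : Fin (m + n) → O) (j : Fin (m + n)) :
    (encU m n u * f + encV m n u * g).coeff (m + n - 1 - (j : ℕ)) =
      Matrix.vecMul u (sylvester f g n m) j := by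
  have hj := j.isLt
  simp only [Matrix.vecMul, dotProduct]
  rw [Fin.sum_univ_add]
  simp only [encU, encV, Finset.sum_mul, coeff_add, finset_sum_coeff]
  congr 1
  · refine Finset.sum_congr rfl fun i _ => ?_
    have hi := i.isLt
    rw [mul_right_comm, mul_assoc, coeff_C_mul, coeff_mul_X_pow']
    simp only [_root_.sylvester, Matrix.of_apply, Fin.coe_castAdd]
    rw [if_pos hi]
    congr 1
    split_ifs with h1 h2 h2 <;>
      first
        | rfl
        | (congr 1; omega)
        | (exact coeff_eq_zero_of_natDegree_lt (by omega))
        | (exact (coeff_eq_zero_of_natDegree_lt (by omega)).symm)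
        | omega
  · refine Finset.sum_congr rfl fun i _ => ?_
    have hi := i.isLt
    rw [mul_right_comm, mul_assoc, coeff_C_mul, coeff_mul_X_pow']
    simp only [_root_.sylvester, Matrix.of_apply, Fin.coe_natAdd]
    have hcond : ¬ (m + (i : ℕ) < m) := by omega
    rw [if_neg hcond]
    congr 1
    split_ifs with h1 h2 h2 <;>
      first
        | rfl
        | (congr 1; omega)
        | (exact coeff_eq_zero_of_natDegree_lt (by omega))
        | (exact (coeff_eq_zero_of_natDegree_lt (by omega)).symm)
        | omega

lemma natDegree_comb_lt (m n : ℕ) (hm : 1 ≤ m) (hn : 1 ≤ n) (f g : O[X])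
    (hf : f.natDegree ≤ n) (hg : g.natDegree ≤ m) (u : Fin (m + n) → O) :
    (encU m n u * f + encV m n u * g).natDegree < m + n := by
  refine lt_of_le_of_lt (natDegree_add_le _ _) ?_
  have h1 : (encU m n u * f).natDegree ≤ (m - 1) + n :=
    natDegree_mul_le.trans (add_le_add (natDegree_encU_le m n u) hf)
  have h2 : (encV m n u * g).natDegree ≤ (n - 1) + m :=
    natDegree_mul_le.trans (add_le_add (natDegree_encV_le m n u) hg)
  simp only [sup_lt_iff]
  omega

/-- Main abstract lemma. -/
lemma exists_unique_pair (m n : ℕ) (hm : 1 ≤ m) (hn : 1 ≤ n) (f g : O[X])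
    (hf : f.natDegree ≤ n) (hg : g.natDegree ≤ m)
    (hres : IsUnit (_root_.sylvester f g n m).det)
    (W : O[X]) (hW : W.natDegree < m + n) :
    ∃! UV : O[X] × O[X],
      UV.1.natDegree ≤ m - 1 ∧ UV.2.natDegree ≤ n - 1 ∧ W = UV.1 * f + UV.2 * g := by
  set S := _root_.sylvester f g n m with hS
  haveI : Invertible S := Matrix.invertibleOfIsUnitDet S hres
  set w : Fin (m + n) → O := fun j => W.coeff (m + n - 1 - (j : ℕ)) with hw
  set u : Fin (m + n) → O := Matrix.vecMul w (⅟S) with hu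
  have hvm : Matrix.vecMul u S = w := by
    rw [hu, Matrix.vecMul_vecMul, invOf_mul_self, Matrix.vecMul_one]
  have hLW : encU m n u * f + encV m n u * g = W := by
    ext k
    rcases lt_or_ge k (m + n) with hk | hk
    · have hjk : m + n - 1 - (m + n - 1 - k) = k := by omega
      have := coeff_key m n f g hf hg u ⟨m + n - 1 - k, by omega⟩
      rw [hvm] at this
      simpa [hw, hjk] using this
    · rw [coeff_eq_zero_of_natDegree_lt (lt_of_lt_of_le (natDegree_comb_lt m n hm hn f g hf hg u) hk),
        coeff_eq_zero_of_natDegree_lt (lt_of_lt_of_le hW hk)]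
  refine ⟨(encU m n u, encV m n u),
    ⟨natDegree_encU_le m n u, natDegree_encV_le m n u, hLW.symm⟩, ?_⟩
  rintro ⟨U, V⟩ ⟨hU, hV, hUV⟩
  -- uniqueness: decode (U, V) as a vector
  set v : Fin (m + n) → O := Fin.append (fun i : Fin m => U.coeff (m - 1 - (i : ℕ)))
    (fun i : Fin n => V.coeff (n - 1 - (i : ℕ))) with hv
  have hencU : encU m n v = U := by
    rw [encU]
    simp only [hv, Fin.append_left]
    exact sum_rev_eq m hm U hU
  have hencV : encV m n v = V := by
    rw [encV]
    simp only [hv, Fin.append_right]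
    exact sum_rev_eq n hn V hV
  have hvmv : Matrix.vecMul v S = w := by
    funext j
    rw [← coeff_key m n f g hf hg v j, hencU, hencV, ← hUV]
  have hveq : v = u := by
    have := congrArg (fun z => Matrix.vecMul z (⅟S)) (hvmv.trans hvm.symm)
    simpa [Matrix.vecMul_vecMul, mul_invOf_self, Matrix.vecMul_one] using this
  rw [Prod.ext_iff]
  exact ⟨by rw [← hencU, hveq], by rw [← hencV, hveq]⟩

end S1Aux

/-- Associated polynomials of order `i`.
For every `0 ≤ i ≤ d − 3` there is a unique pair `(U_i, V_i)` with `deg U_i ≤ d − 2`,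
`deg V_i ≤ d − 1` and `p^i·(∂_x F + p·∂_y F) = U_i·F + V_i·∂_p F`. -/
theorem statement1 {O : Type*} [CommRing O] (dx dy : Derivation ℤ O O)
    (d : ℕ) (hd : 3 ≤ d) (F : O[X]) (hdeg : F.natDegree = d)
    (ha0 : IsUnit F.leadingCoeff)
    (hres : IsUnit (_root_.sylvester F (derivative F) d (d - 1)).det) :
    ∀ i : ℕ, i ≤ d - 3 →
      ∃! UV : O[X] × O[X],
        UV.1.natDegree ≤ d - 2 ∧ UV.2.natDegree ≤ d - 1 ∧
        X ^ i * (cderiv (dx ·) F + X * cderiv (dy ·) F) = UV.1 * F + UV.2 * derivative F := by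

  intro i hi
  have hm : 1 ≤ d - 1 := by omega
  have hn : 1 ≤ d := by omega
  have hf : F.natDegree ≤ d := hdeg.le
  have hg : (derivative F).natDegree ≤ d - 1 := (natDegree_derivative_le F).trans (by omega)
  have hdegW : (X ^ i * (cderiv (dx ·) F + X * cderiv (dy ·) F)).natDegree < (d - 1) + d := by
    refine lt_of_le_of_lt natDegree_mul_le ?_
    have h1 : (cderiv (dx ·) F).natDegree ≤ d := (S1Aux.natDegree_cderiv_le _ F).trans hdeg.le
    have h2 : (X * cderiv (dy ·) F).natDegree ≤ 1 + d :=
      natDegree_mul_le.trans (add_le_add natDegree_X_le ((S1Aux.natDegree_cderiv_le _ F).trans hdeg.le))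
    have h3 : (cderiv (dx ·) F + X * cderiv (dy ·) F).natDegree ≤ 1 + d :=
      (natDegree_add_le _ _).trans (by simp only [sup_le_iff]; omega)
    have h4 : (X ^ i : O[X]).natDegree ≤ i := natDegree_X_pow_le i
    omega
  have key := S1Aux.exists_unique_pair (d - 1) d hm hn F (derivative F) hf hg hres
    (X ^ i * (cderiv (dx ·) F + X * cderiv (dy ·) F)) hdegW
  have e1 : d - 1 - 1 = d - 2 := by omega
  rw [e1] at key
  convert key using 2
end

section
/- Let F ∈ O[p] of degree d have associated polynomials (U_i^F, V_i^F) of order i, and let g be a unit of O. Then the associated polynomials of g·F satisfy U_i^{gF} = U_i^F + (1/g)·p^i·(∂_x g + p·∂_y g) and V_i^{gF} = V_i^F. In particular the polynomials V_i are invariants of the class of F modulo units of O. -/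
open Polynomial

open Finset

lemma cderiv_coeff {O : Type*} [CommRing O] (δ : Derivation ℤ O O) (f : O[X]) (k : ℕ) :
    (cderiv (δ ·) f).coeff k = δ (f.coeff k) := by
  unfold cderiv
  rw [Polynomial.sum_def, finset_sum_coeff]
  simp only [coeff_C_mul, coeff_X_pow, mul_ite, mul_one, mul_zero]
  rw [Finset.sum_ite_eq f.support k (fun n => δ (f.coeff n))]
  split_ifs with hk
  · rfl
  · rw [Polynomial.notMem_support_iff.mp hk, map_zero]

lemma cderiv_C_mul {O : Type*} [CommRing O] (δ : Derivation ℤ O O) (g : O) (f : O[X]) :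
    cderiv (δ ·) (C g * f) = C (δ g) * f + C g * cderiv (δ ·) f := by
  ext k
  simp only [cderiv_coeff, coeff_add, coeff_C_mul]
  rw [Derivation.leibniz]
  simp only [smul_eq_mul]
  ring

lemma sum_row {O : Type*} [CommRing O] (f A : O[X]) (n m j t : ℕ)
    (hf : f.natDegree ≤ n) (hA : ∀ a, m ≤ a → A.coeff a = 0)
    (hjt : j + t = m + n - 1) (hm : 1 ≤ m) :
    ∑ i ∈ range m, (if i ≤ j ∧ j ≤ i + n then A.coeff (m-1-i) * f.coeff (n-(j-i)) else 0)
      = (A * f).coeff t := by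
  rw [Polynomial.coeff_mul, ← Finset.sum_filter]
  rw [← Finset.sum_subset
    (Finset.filter_subset (fun x : ℕ × ℕ => x.1 < m ∧ x.2 ≤ n) (Finset.HasAntidiagonal.antidiagonal t))
    (by
      intro x hx hx'
      simp only [Finset.HasAntidiagonal.mem_antidiagonal] at hx
      simp only [Finset.mem_filter, Finset.HasAntidiagonal.mem_antidiagonal, hx, true_and, not_and_or, not_lt,
        not_le] at hx'
      rcases hx' with h1 | h2
      · rw [hA x.1 h1, zero_mul]
      · rw [Polynomial.coeff_eq_zero_of_natDegree_lt (lt_of_le_of_lt hf h2), mul_zero])]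
  apply Finset.sum_nbij' (i := fun i => (m - 1 - i, n - (j - i))) (j := fun x => m - 1 - x.1)
  · intro a ha
    simp only [Finset.mem_filter, Finset.mem_range] at ha
    simp only [Finset.mem_filter, Finset.HasAntidiagonal.mem_antidiagonal]
    omega
  · intro x hx
    simp only [Finset.mem_filter, Finset.HasAntidiagonal.mem_antidiagonal] at hx
    simp only [Finset.mem_filter, Finset.mem_range]
    omega
  · intro a ha
    simp only [Finset.mem_filter, Finset.mem_range] at ha
    omega
  · intro x hx
    simp only [Finset.mem_filter, Finset.HasAntidiagonal.mem_antidiagonal] at hx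
    have h1 : m - 1 - (m - 1 - x.1) = x.1 := by omega
    have h2 : n - (j - (m - 1 - x.1)) = x.2 := by omega
    rw [h1, h2]
  · intro a _
    rfl

lemma sylv_uniq {O : Type*} [CommRing O] (d : ℕ) (hd : 3 ≤ d) (F : O[X])
    (hdeg : F.natDegree = d)
    (hres : IsUnit (_root_.sylvester F (derivative F) d (d - 1)).det)
    (A B : O[X]) (hA : ∀ a, d - 1 ≤ a → A.coeff a = 0) (hB : ∀ b, d ≤ b → B.coeff b = 0)
    (h : A * F + B * derivative F = 0) : A = 0 ∧ B = 0 := by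
  set n := d with hn
  set m := d - 1 with hm
  set M := _root_.sylvester F (derivative F) n m with hM
  set w : Fin (m + n) → O := fun i =>
    if (i : ℕ) < m then A.coeff (m - 1 - (i : ℕ)) else B.coeff (n - 1 - ((i : ℕ) - m)) with hw
  have hrow : Matrix.vecMul w M = 0 := by
    funext j
    have hj : (j : ℕ) < m + n := j.isLt
    set t := m + n - 1 - (j : ℕ) with ht
    show ∑ i : Fin (m + n), w i * M i j = 0
    set G : ℕ → O := fun k =>
          if k < m then
            (if k ≤ (j : ℕ) ∧ (j : ℕ) ≤ k + n then A.coeff (m-1-k) * F.coeff (n-((j : ℕ)-k)) else 0)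
          else
            (if k - m ≤ (j : ℕ) ∧ (j : ℕ) ≤ k - m + m then
              B.coeff (n-1-(k-m)) * (derivative F).coeff (m-((j : ℕ)-(k-m))) else 0) with hG
    have hfun : ∀ i : Fin (m + n), w i * M i j = G (i : ℕ) := by
      intro i
      simp only [hw, hM, hG, _root_.sylvester, Matrix.of_apply]
      split_ifs <;> ring
    rw [Finset.sum_congr rfl (fun i _ => hfun i), Fin.sum_univ_eq_sum_range G (m + n),
      Finset.sum_range_add]
    have e1' : ∀ k ∈ range m, G k =
        (if k ≤ (j : ℕ) ∧ (j : ℕ) ≤ k + n then A.coeff (m-1-k) * F.coeff (n-((j : ℕ)-k)) else 0) := by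
      intro k hk
      simp only [hG]
      rw [if_pos (Finset.mem_range.mp hk)]
    have e1 : ∑ k ∈ range m, G k = (A * F).coeff t := by
      rw [Finset.sum_congr rfl e1']
      exact sum_row F A n m (j : ℕ) t hdeg.le hA (by omega) (by omega)
    have e2' : ∀ k ∈ range n, G (m + k) =
        (if k ≤ (j : ℕ) ∧ (j : ℕ) ≤ k + m then B.coeff (n-1-k) * (derivative F).coeff (m-((j : ℕ)-k)) else 0) := by
      intro k hk
      simp only [hG, Nat.add_sub_cancel_left]
      rw [if_neg (by omega)]
    have e2 : ∑ k ∈ range n, G (m + k) = (B * derivative F).coeff t := by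
      rw [Finset.sum_congr rfl e2']
      exact sum_row (derivative F) B m n (j : ℕ) t
        (le_trans (natDegree_derivative_le F) (by omega)) hB (by omega) (by omega)
    rw [e1, e2, ← Polynomial.coeff_add, h, Polynomial.coeff_zero]
  have hw0 : w = 0 := by
    have h1 : Matrix.vecMul (Matrix.vecMul w M) M⁻¹ = Matrix.vecMul w (M * M⁻¹) :=
      Matrix.vecMul_vecMul w M M⁻¹
    rw [Matrix.mul_nonsing_inv M hres, Matrix.vecMul_one, hrow, Matrix.zero_vecMul] at h1
    exact h1.symm
  constructor
  · ext a
    rcases le_or_gt (d - 1) a with ha | ha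
    · simp [hA a ha]
    · have := congrFun hw0 ⟨m - 1 - a, by omega⟩
      simp only [hw, Pi.zero_apply] at this
      rw [if_pos (by omega)] at this
      have e : m - 1 - (m - 1 - a) = a := by omega
      rw [e] at this
      simpa using this
  · ext b
    rcases le_or_gt d b with hb | hb
    · simp [hB b hb]
    · have := congrFun hw0 ⟨m + (n - 1 - b), by omega⟩
      simp only [hw, Pi.zero_apply] at this
      rw [if_neg (by omega)] at this
      have e : n - 1 - (m + (n - 1 - b) - m) = b := by omega
      rw [e] at this
      simpa using this


/-- Behaviour of the associated polynomials under units of `O`.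
If `(U_i, V_i)` are the associated polynomials of order `i` of `F` and `(U_i', V_i')`
those of `g·F` for a unit `g` (with inverse `h`), then
`U_i' = U_i + (1/g)·p^i·(∂_x g + p ∂_y g)` and `V_i' = V_i`; in particular the `V_i`
are `O^*`-invariants of the web. -/
theorem statement2 {O : Type*} [CommRing O] (dx dy : Derivation ℤ O O)
    (d : ℕ) (hd : 3 ≤ d) (F : O[X]) (hdeg : F.natDegree = d)
    (ha0 : IsUnit F.leadingCoeff)
    (hres : IsUnit (_root_.sylvester F (derivative F) d (d - 1)).det)
    (g h : O) (hg : g * h = 1)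
    (i : ℕ) (hi : i ≤ d - 3)
    (Ui Vi : O[X]) (hUi : Ui.natDegree ≤ d - 2) (hVi : Vi.natDegree ≤ d - 1)
    (hUV : X ^ i * (cderiv (dx ·) F + X * cderiv (dy ·) F) = Ui * F + Vi * derivative F)
    (Ui' Vi' : O[X]) (hUi' : Ui'.natDegree ≤ d - 2) (hVi' : Vi'.natDegree ≤ d - 1)
    (hUV' : X ^ i * (cderiv (dx ·) (C g * F) + X * cderiv (dy ·) (C g * F))
        = Ui' * (C g * F) + Vi' * derivative (C g * F)) :
    Ui' = Ui + C h * X ^ i * (C (dx g) + X * C (dy g)) ∧ Vi' = Vi := by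
  have hC : (C g : O[X]) * C h = 1 := by rw [← C_mul, hg, C_1]
  rw [cderiv_C_mul dx g F, cderiv_C_mul dy g F, derivative_C_mul] at hUV'
  set W : O[X] := C h * X ^ i * (C (dx g) + X * C (dy g)) with hW
  have hWdeg : W.natDegree ≤ i + 1 := by
    rw [hW]
    compute_degree
  have key : (Ui' - (Ui + W)) * F + (Vi' - Vi) * derivative F = 0 := by
    linear_combination (-(C h : O[X])) * hUV' + hUV -
      (Ui' * F + Vi' * derivative F
        - X ^ i * (cderiv (dx ·) F + X * cderiv (dy ·) F)) * hC
  obtain ⟨hA0, hB0⟩ := sylv_uniq d hd F hdeg hres (Ui' - (Ui + W)) (Vi' - Vi)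
    (fun a ha => by
      have h1 : Ui'.coeff a = 0 := coeff_eq_zero_of_natDegree_lt (by omega)
      have h2 : Ui.coeff a = 0 := coeff_eq_zero_of_natDegree_lt (by omega)
      have h3 : W.coeff a = 0 := coeff_eq_zero_of_natDegree_lt (by omega)
      simp [h1, h2, h3])
    (fun b hb => by
      have h1 : Vi'.coeff b = 0 := coeff_eq_zero_of_natDegree_lt (by omega)
      have h2 : Vi.coeff b = 0 := coeff_eq_zero_of_natDegree_lt (by omega)
      simp [h1, h2])
    key
  exact ⟨sub_eq_zero.mp hA0, sub_eq_zero.mp hB0⟩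
end

section
/- Let p_1,...,p_d ∈ O be pairwise distinct elements (with all differences p_i − p_j, i ≠ j, invertible) and let F = ∏_{i=1}^d (p − p_i) ∈ O[p]. Let (U_k, V_k) be the associated polynomials of order k of F. Then for all 0 ≤ k ≤ d−3 and all 1 ≤ i ≤ d, the evaluation V_k(p_i) equals −(p_i)^k · (∂_x p_i + p_i·∂_y p_i). -/
open Polynomial

/-
Evaluating the defining identity `p^k (∂_x F + p ∂_y F) = U_k F + V_k ∂_p F` at a root `p_i`
kills the `U_k F` term. Since `∂_x` acts on coefficients, differentiating `F(p_i) = 0` gives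
`(∂_x F)(p_i) = -F'(p_i) ∂_x p_i`, and likewise for `∂_y`; so both sides are multiples of
`F'(p_i) = ∏_{j ≠ i} (p_i - p_j)`, which is a unit and can be cancelled.
-/

section

variable {O : Type*} [CommRing O]

lemma cderiv_add (δ : Derivation ℤ O O) (f g : O[X]) :
    cderiv (δ ·) (f + g) = cderiv (δ ·) f + cderiv (δ ·) g := by
  unfold cderiv
  rw [Polynomial.sum_add_index] <;> simp [add_mul]

lemma cderiv_monomial (δ : Derivation ℤ O O) (n : ℕ) (a : O) :
    cderiv (δ ·) (monomial n a) = C (δ a) * X ^ n := by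
  unfold cderiv
  rw [Polynomial.sum_monomial_index]
  simp

lemma eval_cderiv (δ : Derivation ℤ O O) (f : O[X]) (x : O) :
    (cderiv (δ ·) f).eval x = δ (f.eval x) - (derivative f).eval x * δ x := by
  induction f using Polynomial.induction_on' with
  | add f g hf hg =>
      rw [cderiv_add, eval_add, hf, hg, eval_add, map_add, derivative_add, eval_add]
      ring
  | monomial n a =>
      simp [cderiv_monomial, derivative_monomial, Derivation.leibniz, Derivation.leibniz_pow,
        smul_eq_mul]
      ring

lemma eval_of_isRoot_of_isUnit_eval_derivative (dx dy : Derivation ℤ O O) {F U V : O[X]}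
    {k : ℕ} {a : O} (hroot : F.IsRoot a) (hunit : IsUnit ((derivative F).eval a))
    (hUV : X ^ k * (cderiv (dx ·) F + X * cderiv (dy ·) F) = U * F + V * derivative F) :
    V.eval a = -a ^ k * (dx a + a * dy a) := by
  have heval := congrArg (eval a) hUV
  simp only [eval_mul, eval_add, eval_pow, eval_X, eval_cderiv, hroot.eq_zero, map_zero,
    zero_sub, mul_zero, zero_add] at heval
  refine hunit.mul_left_cancel ?_
  linear_combination -heval

lemma eval_derivative_prod_X_sub_C {ι : Type*} [Fintype ι] [DecidableEq ι] (p : ι → O) (i : ι) :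
    (derivative (∏ j, (X - C (p j)))).eval (p i) = ∏ j ∈ Finset.univ.erase i, (p i - p j) := by
  rw [← Finset.mul_prod_erase _ _ (Finset.mem_univ i), derivative_mul]
  simp [eval_prod]

end

theorem statement3_general {O : Type*} [CommRing O] (dx dy : Derivation ℤ O O)
    (d : ℕ)
    (p : Fin d → O) (hp : ∀ i j, i ≠ j → IsUnit (p i - p j))
    (F : O[X]) (hF : F = ∏ i, (X - C (p i)))
    (k : ℕ)
    (Uk Vk : O[X])
    (hUV : X ^ k * (cderiv (dx ·) F + X * cderiv (dy ·) F) = Uk * F + Vk * derivative F) :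
    ∀ i, Vk.eval (p i) = -(p i) ^ k * (dx (p i) + p i * dy (p i)) := by
  intro i
  subst hF
  have hroot : (∏ j, (X - C (p j))).IsRoot (p i) := by
    simpa [IsRoot, eval_prod] using Finset.prod_eq_zero (Finset.mem_univ i) (sub_self (p i))
  have hunit : IsUnit ((derivative (∏ j, (X - C (p j)))).eval (p i)) := by
    rw [eval_derivative_prod_X_sub_C, IsUnit.prod_iff]
    exact fun j hj => hp i j (Finset.ne_of_mem_erase hj).symm
  exact eval_of_isRoot_of_isUnit_eval_derivative dx dy hroot hunit hUV

/-- For `F = ∏ (p − p_i)` with pairwise "distinct" slopes and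
`(U_k, V_k)` the associated polynomials of order `k`, for all `0 ≤ k ≤ d − 3` and all `i`
one has `V_k(p_i) = −p_i^k·(∂_x p_i + p_i ∂_y p_i)`. -/
theorem statement3 {O : Type*} [CommRing O] (dx dy : Derivation ℤ O O)
    (d : ℕ) (hd : 3 ≤ d)
    (p : Fin d → O) (hp : ∀ i j, i ≠ j → IsUnit (p i - p j))
    (F : O[X]) (hF : F = ∏ i, (X - C (p i)))
    (k : ℕ) (hk : k ≤ d - 3)
    (Uk Vk : O[X]) (hUk : Uk.natDegree ≤ d - 2) (hVk : Vk.natDegree ≤ d - 1)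
    (hUV : X ^ k * (cderiv (dx ·) F + X * cderiv (dy ·) F) = Uk * F + Vk * derivative F) :
    ∀ i, Vk.eval (p i) = -(p i) ^ k * (dx (p i) + p i * dy (p i)) :=
  statement3_general dx dy d p hp F hF k Uk Vk hUV
end

section
/- Let F ∈ O[p] of degree d with unit leading coefficient and unit resultant, and let (U_k, V_k) denote its associated polynomials of order k, writing V_{k−1} = v_1^{k−1} p^{d−1} + ... + v_d^{k−1}. Then for all 1 ≤ k ≤ d−3 the polynomial identities V_k − p·V_{k−1} = −(v_1^{k−1}/a_0)·F and U_k − p·U_{k−1} = (v_1^{k−1}/a_0)·∂_p F hold, where a_0 is the leading coefficient of F and v_1^{k−1} the leading (degree d−1) coefficient of V_{k−1}. Consequently all associated polynomials (U_k, V_k) are determined by F and V = V_0. -/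
open Polynomial

lemma block {O : Type*} [CommRing O] (A F : O[X]) (m n j : ℕ) (hm : 0 < m) (hj : j < m + n)
    (hA : A.natDegree ≤ m - 1) (hF : F.natDegree ≤ n) :
    ∑ i ∈ Finset.range m,
        A.coeff (m - 1 - i) * (if i ≤ j ∧ j ≤ i + n then F.coeff (n - (j - i)) else 0)
      = (A * F).coeff (m + n - 1 - j) := by
  have key : ∀ i ∈ Finset.range m,
      A.coeff (m - 1 - i) * (if i ≤ j ∧ j ≤ i + n then F.coeff (n - (j - i)) else 0)
      = (fun a => if a ≤ m + n - 1 - j then A.coeff a * F.coeff (m + n - 1 - j - a) else 0)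
          (m - 1 - i) := by
    intro i hi
    simp only [Finset.mem_range] at hi
    simp only []
    by_cases h1 : i ≤ j ∧ j ≤ i + n
    · obtain ⟨h1a, h1b⟩ := h1
      rw [if_pos ⟨h1a, h1b⟩, if_pos (by omega)]
      congr 2
      omega
    · rw [if_neg h1, mul_zero]
      by_cases h2 : m - 1 - i ≤ m + n - 1 - j
      · rw [if_pos h2]
        rw [coeff_eq_zero_of_natDegree_lt (lt_of_le_of_lt hF (by omega)), mul_zero]
      · rw [if_neg h2]
  rw [Finset.sum_congr rfl key, Finset.sum_range_reflect
    (fun a => if a ≤ m + n - 1 - j then A.coeff a * F.coeff (m + n - 1 - j - a) else 0) m]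
  have e1 : ∑ a ∈ Finset.range m,
        (if a ≤ m + n - 1 - j then A.coeff a * F.coeff (m + n - 1 - j - a) else 0)
      = ∑ a ∈ Finset.range (m + (m + n - 1 - j + 1)),
        (if a ≤ m + n - 1 - j then A.coeff a * F.coeff (m + n - 1 - j - a) else 0) := by
    apply Finset.sum_subset (Finset.range_subset_range.2 (by omega))
    intro x hx hnx
    simp only [Finset.mem_range] at hx hnx
    have : A.coeff x = 0 := coeff_eq_zero_of_natDegree_lt (lt_of_le_of_lt hA (by omega))
    split_ifs <;> simp [this]
  have e2 : ∑ a ∈ Finset.range (m + n - 1 - j + 1),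
        (if a ≤ m + n - 1 - j then A.coeff a * F.coeff (m + n - 1 - j - a) else 0)
      = ∑ a ∈ Finset.range (m + (m + n - 1 - j + 1)),
        (if a ≤ m + n - 1 - j then A.coeff a * F.coeff (m + n - 1 - j - a) else 0) := by
    apply Finset.sum_subset (Finset.range_subset_range.2 (by omega))
    intro x hx hnx
    simp only [Finset.mem_range] at hx hnx
    rw [if_neg (by omega)]
  rw [e1, ← e2, coeff_mul, Finset.Nat.sum_antidiagonal_eq_sum_range_succ_mk]
  apply Finset.sum_congr rfl
  intro a ha
  simp only [Finset.mem_range] at ha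
  rw [if_pos (by omega)]

lemma key_zero {O : Type*} [CommRing O] (d : ℕ) (hd : 3 ≤ d) (F : O[X]) (hdeg : F.natDegree = d)
    (hres : IsUnit (_root_.sylvester F (derivative F) d (d - 1)).det)
    (A B : O[X]) (hA : A.natDegree ≤ d - 2) (hB : B.natDegree ≤ d - 1)
    (h : A * F + B * derivative F = 0) : A = 0 ∧ B = 0 := by
  set S := _root_.sylvester F (derivative F) d (d - 1) with hS
  set w : Fin (d - 1 + d) → O := fun i =>
    if (i : ℕ) < d - 1 then A.coeff (d - 1 - 1 - (i : ℕ))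
    else B.coeff (d - 1 - ((i : ℕ) - (d - 1))) with hw
  have hg : (derivative F).natDegree ≤ d - 1 := hdeg ▸ natDegree_derivative_le F
  have hvm : Matrix.vecMul w S = 0 := by
    funext j
    show ∑ i, w i * S i j = 0
    set f : ℕ → O := fun i =>
          if i < d - 1 then
            A.coeff (d - 1 - 1 - i) *
              (if i ≤ (j : ℕ) ∧ (j : ℕ) ≤ i + d then F.coeff (d - ((j : ℕ) - i)) else 0)
          else
            B.coeff (d - 1 - (i - (d - 1))) *
              (if i - (d - 1) ≤ (j : ℕ) ∧ (j : ℕ) ≤ i - (d - 1) + (d - 1) then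
                (derivative F).coeff ((d - 1) - ((j : ℕ) - (i - (d - 1)))) else 0) with hf
    have step : ∀ i : Fin (d - 1 + d), w i * S i j = f (i : ℕ) := by
      intro i
      simp only [hw, hS, hf, _root_.sylvester, Matrix.of_apply]
      by_cases hi : (i : ℕ) < d - 1
      · rw [if_pos hi, if_pos hi, if_pos hi]
      · rw [if_neg hi, if_neg hi, if_neg hi]
    rw [Finset.sum_congr rfl (fun i _ => step i), Fin.sum_univ_eq_sum_range f,
      Finset.sum_range_add]
    have part1 : ∑ i ∈ Finset.range (d - 1), f i
        = (A * F).coeff (d - 1 + d - 1 - (j : ℕ)) := by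
      rw [← block A F (d - 1) d (j : ℕ) (by omega) (by have := j.isLt; omega) (by omega) (le_of_eq hdeg)]
      apply Finset.sum_congr rfl
      intro i hi
      simp only [Finset.mem_range] at hi
      simp only [hf, if_pos hi]
    have part2 : ∑ i ∈ Finset.range d, f (d - 1 + i)
        = (B * derivative F).coeff (d - 1 + d - 1 - (j : ℕ)) := by
      have harg : d + (d - 1) - 1 - (j : ℕ) = d - 1 + d - 1 - (j : ℕ) := by omega
      rw [← harg, ← block B (derivative F) d (d - 1) (j : ℕ) (by omega)
        (by have := j.isLt; omega) (by omega) hg]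
      apply Finset.sum_congr rfl
      intro t ht
      simp only [Finset.mem_range] at ht
      have h1 : ¬ (d - 1 + t < d - 1) := by omega
      have h2 : d - 1 + t - (d - 1) = t := by omega
      simp only [hf, if_neg h1, h2]
    rw [part1, part2, ← coeff_add, h, coeff_zero]
  have hw0 : w = 0 := by
    have hinv := Matrix.mul_nonsing_inv S hres
    calc w = Matrix.vecMul w 1 := by rw [Matrix.vecMul_one]
    _ = Matrix.vecMul w (S * S⁻¹) := by rw [hinv]
    _ = Matrix.vecMul (Matrix.vecMul w S) S⁻¹ := by rw [Matrix.vecMul_vecMul]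
    _ = 0 := by rw [hvm, Matrix.zero_vecMul]
  constructor
  · ext t
    simp only [coeff_zero]
    by_cases ht : t ≤ d - 2
    · have hlt : d - 2 - t < d - 1 + d := by omega
      have := congrFun hw0 ⟨d - 2 - t, hlt⟩
      simp only [hw, Pi.zero_apply] at this
      have hv : ((⟨d - 2 - t, hlt⟩ : Fin (d - 1 + d)) : ℕ) = d - 2 - t := rfl
      rw [if_pos (by omega)] at this
      rw [← this]
      congr 1
      omega
    · exact coeff_eq_zero_of_natDegree_lt (lt_of_le_of_lt hA (by omega))
  · ext t
    simp only [coeff_zero]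
    by_cases ht : t ≤ d - 1
    · have hlt : d - 1 + (d - 1 - t) < d - 1 + d := by omega
      have := congrFun hw0 ⟨d - 1 + (d - 1 - t), hlt⟩
      simp only [hw, Pi.zero_apply] at this
      have hv : ((⟨d - 1 + (d - 1 - t), hlt⟩ : Fin (d - 1 + d)) : ℕ) = d - 1 + (d - 1 - t) := rfl
      rw [if_neg (by omega)] at this
      rw [← this]
      congr 1
      omega
    · exact coeff_eq_zero_of_natDegree_lt (lt_of_le_of_lt hB (by omega))

/-- Writing `v_1^{k−1}` for the degree-`d−1` coefficient of `V_{k−1}`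
and `a_0` for the (unit) leading coefficient of `F` (with inverse `a0'`), for all
`1 ≤ k ≤ d − 3` one has the polynomial identities
`V_k − p·V_{k−1} = −(v_1^{k−1}/a_0)·F` and `U_k − p·U_{k−1} = (v_1^{k−1}/a_0)·∂_p F`;
consequently all associated polynomials are determined by `F` and `V = V_0`. -/
theorem statement6 {O : Type*} [CommRing O] (dx dy : Derivation ℤ O O)
    (d : ℕ) (hd : 3 ≤ d) (F : O[X]) (hdeg : F.natDegree = d)
    (a0' : O) (ha0 : F.leadingCoeff * a0' = 1)
    (hres : IsUnit (_root_.sylvester F (derivative F) d (d - 1)).det)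
    (U V : ℕ → O[X])
    (hU : ∀ k ≤ d - 3, (U k).natDegree ≤ d - 2)
    (hV : ∀ k ≤ d - 3, (V k).natDegree ≤ d - 1)
    (hUV : ∀ k ≤ d - 3,
      X ^ k * (cderiv (dx ·) F + X * cderiv (dy ·) F) = U k * F + V k * derivative F) :
    ∀ k, 1 ≤ k → k ≤ d - 3 →
      V k - X * V (k - 1) = -C ((V (k - 1)).coeff (d - 1) * a0') * F ∧
      U k - X * U (k - 1) = C ((V (k - 1)).coeff (d - 1) * a0') * derivative F := by
  intro k hk1 hk2
  set g := derivative F with hgdef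
  set c0 : O := (V (k - 1)).coeff (d - 1) * a0' with hc0
  have hk2' : k - 1 ≤ d - 3 := by omega
  have e1 := hUV k hk2
  have e2 := hUV (k - 1) hk2'
  have hxk : (X : O[X]) ^ k = X * X ^ (k - 1) := by
    rw [← pow_succ']
    congr 1
    omega
  have hgd : g.natDegree ≤ d - 1 := hdeg ▸ natDegree_derivative_le F
  have hUk := hU k hk2
  have hUk1 := hU (k - 1) hk2'
  have hVk := hV k hk2
  have hVk1 := hV (k - 1) hk2'
  set A : O[X] := U k - X * U (k - 1) - C c0 * g with hA
  set B : O[X] := V k - X * V (k - 1) + C c0 * F with hB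
  have h0 : A * F + B * g = 0 := by
    have e3 : (X : O[X]) ^ k * (cderiv (dx ·) F + X * cderiv (dy ·) F)
        = X * (X ^ (k - 1) * (cderiv (dx ·) F + X * cderiv (dy ·) F)) := by
      rw [← mul_assoc, ← hxk]
    rw [hA, hB]
    linear_combination -e1 + X * e2 + e3
  have hFtop : F.coeff d = F.leadingCoeff := by rw [← hdeg]; rfl
  have hBd : B.natDegree ≤ d := by
    refine le_trans (natDegree_add_le _ _) (max_le (le_trans (natDegree_sub_le _ _) ?_) ?_)
    · exact max_le (by omega) (le_trans natDegree_mul_le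
        (le_trans (add_le_add natDegree_X_le hVk1) (by omega)))
    · exact le_trans natDegree_mul_le (by rw [natDegree_C, hdeg]; omega)
  have hBtop : B.coeff d = 0 := by
    have hd1 : d = (d - 1) + 1 := by omega
    rw [hB, coeff_add, coeff_sub, coeff_C_mul, hFtop,
      coeff_eq_zero_of_natDegree_lt (lt_of_le_of_lt hVk (by omega)), zero_sub]
    rw [hd1, coeff_X_mul]
    linear_combination F.leadingCoeff * hc0 + (V (k - 1)).coeff (d - 1) * ha0
  have hBdeg : B.natDegree ≤ d - 1 := by
    rw [natDegree_le_iff_coeff_eq_zero]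
    intro m hm
    rcases eq_or_lt_of_le (Nat.succ_le_of_lt hm) with h | h
    · rw [show m = d by omega, hBtop]
    · exact coeff_eq_zero_of_natDegree_lt (lt_of_le_of_lt hBd (by omega))
  have hAd : A.natDegree ≤ d - 1 := by
    refine le_trans (natDegree_sub_le _ _) (max_le (le_trans (natDegree_sub_le _ _) ?_) ?_)
    · exact max_le (by omega) (le_trans natDegree_mul_le
        (le_trans (add_le_add natDegree_X_le hUk1) (by omega)))
    · exact le_trans natDegree_mul_le (by rw [natDegree_C]; omega)
  have hAtop : A.coeff (d - 1) = 0 := by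
    have hcoeff : (A * F + B * g).coeff (d - 1 + d) = 0 := by rw [h0, coeff_zero]
    rw [coeff_add, coeff_mul_add_eq_of_natDegree_le hAd (le_of_eq hdeg),
      coeff_eq_zero_of_natDegree_lt (lt_of_le_of_lt natDegree_mul_le
        (lt_of_le_of_lt (add_le_add hBdeg hgd) (by omega))), add_zero, hFtop] at hcoeff
    have := congrArg (· * a0') hcoeff
    simp only [zero_mul, mul_assoc] at this
    rwa [ha0, mul_one] at this
  have hAdeg : A.natDegree ≤ d - 2 := by
    rw [natDegree_le_iff_coeff_eq_zero]
    intro m hm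
    rcases eq_or_lt_of_le (Nat.succ_le_of_lt hm) with h | h
    · rw [show m = d - 1 by omega, hAtop]
    · exact coeff_eq_zero_of_natDegree_lt (lt_of_le_of_lt hAd (by omega))
  obtain ⟨hA0, hB0⟩ := key_zero d hd F hdeg hres A B hAdeg hBdeg h0
  constructor
  · rw [hB] at hB0
    linear_combination hB0
  · rw [hA] at hA0
    linear_combination hA0
end

section
/- Let r ∈ O[p] of degree ≤ d−3 with coefficients b_3,...,b_d, and let U_r, V_r be as defined from the associated polynomials of F. Then the 1-form ω = r·(dy − p dx)/∂_p F on the surface S = {F = 0} is closed (equivalently, (b_3,...,b_d) is an abelian relation of the web) if and only if U_r + ∂_p(V_r) = ∂_x(r) + p·∂_y(r) as polynomials in p. -/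
open Polynomial

set_option maxHeartbeats 1000000

/-- The resultant (determinant of the Sylvester matrix of `F` and `F'`) lies in the
ideal generated by `F` and `F'`. -/
lemma sylvester_det_mem {O : Type*} [CommRing O] (F : O[X]) (d : ℕ) (hd : 3 ≤ d)
    (hdeg : F.natDegree = d) :
    (C ((_root_.sylvester F (derivative F) d (d - 1)).det) : O[X]) ∈
      Ideal.span {F, derivative F} := by
  set M := _root_.sylvester F (derivative F) d (d - 1) with hM
  set N : Matrix (Fin (d - 1 + d)) (Fin (d - 1 + d)) O[X] := M.map C with hN
  set c : Fin (d - 1 + d) → O[X] := fun j => X ^ (d - 1 + d - 1 - (j : ℕ)) with hc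
  have hFmem : F ∈ Ideal.span {F, derivative F} := Ideal.subset_span (by simp)
  have hGmem : derivative F ∈ Ideal.span ({F, derivative F} : Set O[X]) :=
    Ideal.subset_span (by simp)
  have key : ∀ i, (N.mulVec c) i ∈ Ideal.span {F, derivative F} := by
    intro i
    show (∑ j, N i j * c j) ∈ _
    by_cases hi : (i : ℕ) < d - 1
    · have hile : (i : ℕ) ≤ d - 2 := by omega
      have hMij : ∀ j : Fin (d - 1 + d), N i j =
          if (i : ℕ) ≤ (j : ℕ) ∧ (j : ℕ) ≤ (i : ℕ) + d then
            C (F.coeff (d - ((j : ℕ) - (i : ℕ)))) else 0 := by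
        intro j
        simp only [hN, Matrix.map_apply, hM, _root_.sylvester, Matrix.of_apply, if_pos hi]
        split_ifs <;> simp
      have hsum : (∑ j, N i j * c j) = X ^ (d - 2 - (i : ℕ)) * F := by
        calc (∑ j, N i j * c j)
            = ∑ j : Fin (d - 1 + d), (fun jj : ℕ =>
                (if (i : ℕ) ≤ jj ∧ jj ≤ (i : ℕ) + d then
                  C (F.coeff (d - (jj - (i : ℕ)))) else 0) * X ^ (d - 1 + d - 1 - jj)) (j : ℕ) := by
              refine Finset.sum_congr rfl fun j _ => ?_
              rw [hMij]
          _ = ∑ jj ∈ Finset.range (d - 1 + d), (if (i : ℕ) ≤ jj ∧ jj ≤ (i : ℕ) + d then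
                C (F.coeff (d - (jj - (i : ℕ)))) else 0) * X ^ (d - 1 + d - 1 - jj) :=
              by rw [← Fin.sum_univ_eq_sum_range]
          _ = ∑ jj ∈ Finset.Ico (i : ℕ) ((i : ℕ) + d + 1), (if (i : ℕ) ≤ jj ∧ jj ≤ (i : ℕ) + d then
                C (F.coeff (d - (jj - (i : ℕ)))) else 0) * X ^ (d - 1 + d - 1 - jj) := by
              refine (Finset.sum_subset ?_ ?_).symm
              · intro x hx
                simp only [Finset.mem_Ico] at hx
                simp only [Finset.mem_range]
                omega
              · intro x _ hx
                simp only [Finset.mem_Ico] at hx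
                rw [if_neg (by omega), zero_mul]
          _ = ∑ k ∈ Finset.range ((i : ℕ) + d + 1 - (i : ℕ)), (if (i : ℕ) ≤ (i : ℕ) + k ∧
                (i : ℕ) + k ≤ (i : ℕ) + d then C (F.coeff (d - ((i : ℕ) + k - (i : ℕ)))) else 0) *
                X ^ (d - 1 + d - 1 - ((i : ℕ) + k)) := Finset.sum_Ico_eq_sum_range _ _ _
          _ = ∑ k ∈ Finset.range (d + 1), X ^ (d - 2 - (i : ℕ)) * (C (F.coeff (d - k)) * X ^ (d - k)) := by
              have h1 : (i : ℕ) + d + 1 - (i : ℕ) = d + 1 := by omega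
              rw [h1]
              refine Finset.sum_congr rfl fun k hk => ?_
              simp only [Finset.mem_range] at hk
              rw [if_pos (by omega), Nat.add_sub_cancel_left]
              have h2 : d - 1 + d - 1 - ((i : ℕ) + k) = (d - 2 - (i : ℕ)) + (d - k) := by omega
              rw [h2, pow_add]; ring
          _ = X ^ (d - 2 - (i : ℕ)) * ∑ k ∈ Finset.range (d + 1), C (F.coeff (d - k)) * X ^ (d - k) := by
              rw [Finset.mul_sum]
          _ = X ^ (d - 2 - (i : ℕ)) * F := by
              congr 1
              have := Finset.sum_range_reflect (fun l => C (F.coeff l) * X ^ l) (d + 1)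
              simp only [Nat.add_sub_cancel] at this
              rw [this]
              conv_rhs => rw [F.as_sum_range' (d + 1) (by omega)]
              simp [C_mul_X_pow_eq_monomial]
      rw [hsum]
      exact Ideal.mul_mem_left _ _ hFmem
    · have hia : (i : ℕ) - (d - 1) ≤ d - 1 := by omega
      have hMij : ∀ j : Fin (d - 1 + d), N i j =
          if (i : ℕ) - (d - 1) ≤ (j : ℕ) ∧ (j : ℕ) ≤ (i : ℕ) - (d - 1) + (d - 1) then
            C ((derivative F).coeff ((d - 1) - ((j : ℕ) - ((i : ℕ) - (d - 1))))) else 0 := by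
        intro j
        simp only [hN, Matrix.map_apply, hM, _root_.sylvester, Matrix.of_apply, if_neg hi]
        split_ifs <;> simp
      set a := (i : ℕ) - (d - 1) with ha
      have hsum : (∑ j, N i j * c j) = X ^ (d - 1 - a) * derivative F := by
        calc (∑ j, N i j * c j)
            = ∑ j : Fin (d - 1 + d), (fun jj : ℕ =>
                (if a ≤ jj ∧ jj ≤ a + (d - 1) then
                  C ((derivative F).coeff ((d - 1) - (jj - a))) else 0) *
                  X ^ (d - 1 + d - 1 - jj)) (j : ℕ) := by
              refine Finset.sum_congr rfl fun j _ => ?_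
              rw [hMij]
          _ = ∑ jj ∈ Finset.range (d - 1 + d), (if a ≤ jj ∧ jj ≤ a + (d - 1) then
                C ((derivative F).coeff ((d - 1) - (jj - a))) else 0) * X ^ (d - 1 + d - 1 - jj) :=
              Fin.sum_univ_eq_sum_range (fun jj => (if a ≤ jj ∧ jj ≤ a + (d - 1) then
                C ((derivative F).coeff ((d - 1) - (jj - a))) else 0) * X ^ (d - 1 + d - 1 - jj))
                (d - 1 + d)
          _ = ∑ jj ∈ Finset.Ico a (a + (d - 1) + 1), (if a ≤ jj ∧ jj ≤ a + (d - 1) then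
                C ((derivative F).coeff ((d - 1) - (jj - a))) else 0) * X ^ (d - 1 + d - 1 - jj) := by
              refine (Finset.sum_subset ?_ ?_).symm
              · intro x hx
                simp only [Finset.mem_Ico] at hx
                simp only [Finset.mem_range]
                omega
              · intro x _ hx
                simp only [Finset.mem_Ico] at hx
                rw [if_neg (by omega), zero_mul]
          _ = ∑ k ∈ Finset.range (a + (d - 1) + 1 - a), (if a ≤ a + k ∧ a + k ≤ a + (d - 1) then
                C ((derivative F).coeff ((d - 1) - (a + k - a))) else 0) *
                X ^ (d - 1 + d - 1 - (a + k)) := Finset.sum_Ico_eq_sum_range _ _ _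
          _ = ∑ k ∈ Finset.range d, X ^ (d - 1 - a) *
                (C ((derivative F).coeff ((d - 1) - k)) * X ^ ((d - 1) - k)) := by
              have h1 : a + (d - 1) + 1 - a = d := by omega
              rw [h1]
              refine Finset.sum_congr rfl fun k hk => ?_
              simp only [Finset.mem_range] at hk
              rw [if_pos (by omega), Nat.add_sub_cancel_left]
              have h2 : d - 1 + d - 1 - (a + k) = (d - 1 - a) + ((d - 1) - k) := by omega
              rw [h2, pow_add]; ring
          _ = X ^ (d - 1 - a) * ∑ k ∈ Finset.range d, C ((derivative F).coeff ((d - 1) - k)) *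
                X ^ ((d - 1) - k) := by rw [Finset.mul_sum]
          _ = X ^ (d - 1 - a) * derivative F := by
              congr 1
              have := Finset.sum_range_reflect
                (fun l => C ((derivative F).coeff l) * X ^ l) d
              have hd1 : ∀ k, d - 1 - k = d - 1 - k := fun _ => rfl
              rw [show (∑ k ∈ Finset.range d, C ((derivative F).coeff (d - 1 - k)) *
                X ^ (d - 1 - k)) = ∑ l ∈ Finset.range d, C ((derivative F).coeff l) * X ^ l from this]
              conv_rhs => rw [(derivative F).as_sum_range' d
                (lt_of_le_of_lt (natDegree_derivative_le F) (by omega))]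
              simp [C_mul_X_pow_eq_monomial]
      rw [hsum]
      exact Ideal.mul_mem_left _ _ hGmem
  -- Now extract the determinant via the adjugate
  set j₀ : Fin (d - 1 + d) := ⟨d - 1 + d - 1, by omega⟩ with hj₀
  have hcj₀ : c j₀ = 1 := by
    simp only [hc, hj₀]
    norm_num
  have h1 : (N.adjugate.mulVec (N.mulVec c)) j₀ = N.det * c j₀ := by
    rw [Matrix.mulVec_mulVec, Matrix.adjugate_mul, Matrix.smul_mulVec, Matrix.one_mulVec]
    simp [smul_eq_mul]
  have h2 : N.det = (N.adjugate.mulVec (N.mulVec c)) j₀ := by rw [h1, hcj₀, mul_one]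
  have h3 : N.det ∈ Ideal.span ({F, derivative F} : Set O[X]) := by
    rw [h2]
    show (∑ k, N.adjugate j₀ k * (N.mulVec c) k) ∈ _
    exact Ideal.sum_mem _ fun k _ => Ideal.mul_mem_left _ _ (key k)
  have h4 : (C : O →+* O[X]) M.det = N.det := by
    rw [RingHom.map_det]; rfl
  rw [h4]; exact h3

/-- Abelian relations and associated polynomials.
For `r = b_3 p^{d−3} + ⋯ + b_d`, the 1-form `ω = r·(dy − p dx)/∂_p F` on `S = {F = 0}`
is closed — algebraically: there exists `r_p` of degree `≤ d − 1` with
`r(∂_x F + p ∂_y F) + r_p ∂_p F = (∂_x r + p ∂_y r + ∂_p r_p)·F` — if and only if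
`U_r + ∂_p(V_r) = ∂_x r + p ∂_y r`. -/
theorem statement10 {O : Type*} [CommRing O] (dx dy : Derivation ℤ O O)
    (d : ℕ) (hd : 3 ≤ d) (F : O[X]) (hdeg : F.natDegree = d)
    (ha0 : IsUnit F.leadingCoeff)
    (hres : IsUnit (_root_.sylvester F (derivative F) d (d - 1)).det)
    (b : ℕ → O) (r : O[X]) (hr : r = ∑ j ∈ Finset.Icc 3 d, C (b j) * X ^ (d - j))
    (U V : ℕ → O[X])
    (hU : ∀ i ≤ d - 3, (U i).natDegree ≤ d - 2)
    (hV : ∀ i ≤ d - 3, (V i).natDegree ≤ d - 1)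
    (hUV : ∀ i ≤ d - 3,
      X ^ i * (cderiv (dx ·) F + X * cderiv (dy ·) F) = U i * F + V i * derivative F)
    (Ur Vr : O[X])
    (hUr : Ur = ∑ j ∈ Finset.Icc 3 d, C (b j) * U (d - j))
    (hVr : Vr = ∑ j ∈ Finset.Icc 3 d, C (b j) * V (d - j)) :
    (∃ rp : O[X], rp.natDegree ≤ d - 1 ∧
        r * (cderiv (dx ·) F + X * cderiv (dy ·) F) + rp * derivative F
          = (cderiv (dx ·) r + X * cderiv (dy ·) r + derivative rp) * F) ↔
      Ur + derivative Vr = cderiv (dx ·) r + X * cderiv (dy ·) r := by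
  -- the key identity  r·A = Ur·F + Vr·F'
  have key : r * (cderiv (dx ·) F + X * cderiv (dy ·) F) = Ur * F + Vr * derivative F := by
    rw [hr, hUr, hVr, Finset.sum_mul, Finset.sum_mul, Finset.sum_mul, ← Finset.sum_add_distrib]
    refine Finset.sum_congr rfl fun j hj => ?_
    obtain ⟨h3, hjd⟩ := Finset.mem_Icc.mp hj
    have h := hUV (d - j) (by omega)
    rw [mul_assoc, h]; ring
  -- degree bound for Vr
  have hVrdeg : Vr.natDegree ≤ d - 1 := by
    rw [hVr]
    refine natDegree_sum_le_of_forall_le _ _ fun j hj => ?_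
    obtain ⟨h3, hjd⟩ := Finset.mem_Icc.mp hj
    exact le_trans (natDegree_C_mul_le _ _) (hV (d - j) (by omega))
  -- F is regular (unit leading coefficient)
  have hFreg : ∀ h : O[X], h * F = 0 → h = 0 := by
    intro h hh
    by_contra hne
    have hc := coeff_mul_degree_add_degree h F
    rw [hh, coeff_zero] at hc
    have : h.leadingCoeff = 0 := (ha0.mul_left_eq_zero).mp hc.symm
    exact hne (leadingCoeff_eq_zero.mp this)
  constructor
  · rintro ⟨rp, hrpdeg, heq⟩
    -- derive (Vr + rp)·F' = G·F
    have h2 : (Vr + rp) * derivative F =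
        (cderiv (dx ·) r + X * cderiv (dy ·) r + derivative rp - Ur) * F := by
      linear_combination heq - key
    -- resultant in the ideal
    obtain ⟨a, bb, hab⟩ := Ideal.mem_span_pair.mp (sylvester_det_mem F d hd hdeg)
    have hdvd : F ∣ (Vr + rp) * C ((_root_.sylvester F (derivative F) d (d - 1)).det) := by
      refine ⟨a * (Vr + rp) + bb * (cderiv (dx ·) r + X * cderiv (dy ·) r + derivative rp - Ur), ?_⟩
      linear_combination (Vr + rp) * hab.symm + bb * h2
    have hudet : IsUnit (C ((_root_.sylvester F (derivative F) d (d - 1)).det) : O[X]) := hres.map C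
    have hdvd' : F ∣ Vr + rp := (IsUnit.dvd_mul_right hudet).mp hdvd
    have hq0 : Vr + rp = 0 := by
      obtain ⟨h, hh⟩ := hdvd'
      by_cases hhz : h = 0
      · rw [hh, hhz, mul_zero]
      · exfalso
        have hlc : F.leadingCoeff * h.leadingCoeff ≠ 0 := by
          intro hz
          exact hhz (leadingCoeff_eq_zero.mp
            ((ha0.mul_right_eq_zero).mp hz))
        have hdmul : (F * h).natDegree = F.natDegree + h.natDegree := natDegree_mul' hlc
        have hle : (Vr + rp).natDegree ≤ d - 1 :=
          le_trans (natDegree_add_le _ _) (max_le hVrdeg hrpdeg)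
        rw [hh, hdmul, hdeg] at hle
        omega
    have hrp : rp = -Vr := by linear_combination hq0
    subst hrp
    rw [map_neg] at h2
    have h5 : (cderiv (dx ·) r + X * cderiv (dy ·) r - derivative Vr - Ur) * F = 0 := by
      linear_combination -h2
    have h6 := hFreg _ h5
    linear_combination -h6
  · intro hkey
    refine ⟨-Vr, ?_, ?_⟩
    · rw [natDegree_neg]; exact hVrdeg
    · rw [map_neg]
      linear_combination key + F * hkey
end

section
/- An abelian relation (g_1(F_1),...,g_d(F_d)) of the d-web W(F_1,...,F_d), corresponding under the isomorphism T to the 1-form r·(dy − p dx)/∂_p F with r = F·Σ_{i=1}^d g_i(F_i)∂_y(F_i)/(p − p_i), is an abelian relation of the extracted web W_k(d−1) obtained by removing the k-th foliation if and only if r(x,y,p_k) = 0, i.e. (p − p_k) divides r in O[p]. -/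
open Polynomial

theorem eval_sum_C_mul_prod_erase_X_sub_C {R ι : Type*} [CommRing R] [DecidableEq ι]
    (s : Finset ι) (c v : ι → R) {k : ι} (hk : k ∈ s) :
    (∑ i ∈ s, C (c i) * ∏ j ∈ s.erase i, (X - C (v j))).eval (v k) =
      c k * ∏ j ∈ s.erase k, (v k - v j) := by
  rw [eval_finsetSum, Finset.sum_eq_single_of_mem k hk]
  · simp [eval_prod]
  · intro i _ hik
    have hk_erase : k ∈ s.erase i := Finset.mem_erase.mpr ⟨hik.symm, hk⟩
    rw [eval_mul, eval_prod, Finset.prod_eq_zero hk_erase (by simp), mul_zero]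

theorem isUnit_prod_erase_sub {R ι : Type*} [CommRing R] [DecidableEq ι]
    (s : Finset ι) (v : ι → R) (hv : ∀ i j, i ≠ j → IsUnit (v i - v j)) (k : ι) :
    IsUnit (∏ j ∈ s.erase k, (v k - v j)) :=
  IsUnit.prod_iff.mpr fun j hj => hv k j (Finset.ne_of_mem_erase hj).symm

theorem statement12_general {O : Type*} [CommRing O] (dy : Derivation ℤ O O)
    (d : ℕ)
    (Fl : Fin d → O)   -- the level functions F_i
    (g : Fin d → O)    -- the values g_i(F_i)
    (p : Fin d → O)    -- the slopes
    (hdyF : ∀ i, IsUnit (dy (Fl i)))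
    (hp : ∀ i j, i ≠ j → IsUnit (p i - p j))
    (r : O[X])
    (hr : r = ∑ i, C (g i * dy (Fl i)) *
        ∏ j ∈ Finset.univ.erase i, (X - C (p j)))
    (k : Fin d) :
    r.eval (p k) = g k * dy (Fl k) * ∏ j ∈ Finset.univ.erase k, (p k - p j) ∧
    (g k = 0 ↔ r.eval (p k) = 0) ∧
    (r.eval (p k) = 0 ↔ (X - C (p k)) ∣ r) := by
  have hr_eval : r.eval (p k) = g k * dy (Fl k) * ∏ j ∈ Finset.univ.erase k, (p k - p j) := by
    subst hr
    exact eval_sum_C_mul_prod_erase_X_sub_C _ (fun i => g i * dy (Fl i)) p (Finset.mem_univ k)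
  have hunit : IsUnit (dy (Fl k) * ∏ j ∈ Finset.univ.erase k, (p k - p j)) :=
    (hdyF k).mul (isUnit_prod_erase_sub _ p hp k)
  refine ⟨hr_eval, ?_, dvd_iff_isRoot.symm⟩
  rw [hr_eval, mul_assoc, hunit.mul_left_eq_zero]

/-- An abelian relation `(g_1(F_1), …, g_d(F_d))` of the web
`W(F_1, …, F_d)`, corresponding to
`r = F·Σ g_i(F_i) ∂_y(F_i)/(p − p_i) = Σ g_i(F_i) ∂_y(F_i)·∏_{j≠i}(p − p_j)`,
belongs to the extracted web `W_k(d−1)` (i.e. `g_k(F_k) = 0`) if and only if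
`r(p_k) = 0`, if and only if `(p − p_k) ∣ r`; indeed
`r(p_k) = g_k(F_k)·∂_y(F_k)·∏_{j≠k}(p_k − p_j)`. -/
theorem statement12 {O : Type*} [CommRing O] (dx dy : Derivation ℤ O O)
    (d : ℕ) (hd : 3 ≤ d)
    (Fl : Fin d → O)   -- the level functions F_i
    (g : Fin d → O)    -- the values g_i(F_i)
    (p : Fin d → O)    -- the slopes
    (hdyF : ∀ i, IsUnit (dy (Fl i)))
    (hslope : ∀ i, dx (Fl i) + p i * dy (Fl i) = 0)
    (hp : ∀ i j, i ≠ j → IsUnit (p i - p j))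
    (r : O[X])
    (hr : r = ∑ i, C (g i * dy (Fl i)) *
        ∏ j ∈ Finset.univ.erase i, (X - C (p j)))
    (k : Fin d) :
    r.eval (p k) = g k * dy (Fl k) * ∏ j ∈ Finset.univ.erase k, (p k - p j) ∧
    (g k = 0 ↔ r.eval (p k) = 0) ∧
    (r.eval (p k) = 0 ↔ (X - C (p k)) ∣ r) :=
  statement12_general dy d Fl g p hdyF hp r hr k
end

section
/- A 4-web whose connection has k_1 = 0 and whose rank of abelian relations is at least 2 has zero curvature matrix, hence is of maximal rank 3. -/
/-- Rigidity for 4-webs.  In the setting of the connection `(E, ∇)`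
of rank 3 associated with a planar 4-web, the curvature matrix has only its first row
`(k_1, k_2, k_3)` nonzero, and the matrix `(k_{mℓ})` is built from the curvature and
the connection by the explicit formulas of the paper.  If `k_1 = 0` and all `2 × 2`
minors of `(k_{mℓ})` vanish (i.e. the rank of abelian relations is at least 2), then
the whole curvature matrix is zero; hence the web is of maximal rank 3. -/
theorem statement18 {O : Type*} [CommRing O] [IsDomain O]
    (dx dy : Derivation ℤ O O)
    (A1 A2 v1 v2 v3 v4 k1 k2 k3 : O)
    (km : Matrix (Fin 3) (Fin 3) O)
    (hkm : km = !![k1, k2, k3;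
      dx k1 - A1 * k1 + k2,
      dx k2 - (dy v4 + v4 * v2) * k1 - (A1 - v3) * k2 - v4 * k3,
      dx k3 - (v1 * v4 - (dx A2 - dy A1)) * k1 - A1 * k3;
      dy k1 - (A2 - v2) * k1 + k3,
      dy k2 - (v1 * v4 + (dx (A2 - v2) - dy (A1 - v3))) * k1 - (A2 - v2) * k2,
      dy k3 - (v1 * v3 - dx v1) * k1 + v1 * k2 - A2 * k3])
    (hk1 : k1 = 0)
    (hminors : ∀ i0 i1 j0 j1 : Fin 3, i0 ≠ i1 → j0 ≠ j1 →
      km i0 j0 * km i1 j1 - km i0 j1 * km i1 j0 = 0) :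
    k2 = 0 ∧ k3 = 0 ∧
      (!![k1, k2, k3; 0, 0, 0; 0, 0, 0] : Matrix (Fin 3) (Fin 3) O) = 0 := by
  subst hk1 hkm
  have h2 := hminors 0 1 0 1 (by decide) (by decide)
  have h3 := hminors 0 2 0 2 (by decide) (by decide)
  simp at h2 h3
  refine ⟨h2, h3, ?_⟩
  subst h2 h3
  ext i j
  fin_cases i <;> fin_cases j <;> simp [Matrix.vecHead, Matrix.vecTail]
end
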